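/- arXiv:1702.06153 — 6 statements merged into one kernel-verified Lean document; each statement's English description precedes it below -/
import Mathlib

section
/- (Lemma, Section II) Fix any coloring of the pairs of vertices. Suppose there is a balanced partition (Â,B̂) with {Â,B̂} ≠ {A,B} such that ∑_{i=1}^m (l_i(Â) + l_i(B̂)) log(p_i/q_i) ≥ ∑_{i=1}^m (l_i(A) + l_i(B)) log(p_i/q_i). Then there exist an integer k with 1 ≤ k ≤ n/4 and sets A_w ⊂ A and B_w ⊂ B with |A_w| = |B_w| = k such that ∑_{i=1}^m [o_i(A_w, B∖B_w) + o_i(B_w, A∖A_w)] log(p_i/q_i) ≥ ∑_{i=1}^m [o_i(A_w, A∖A_w) + o_i(B_w, B∖B_w)] log(p_i/q_i). -/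
open MeasureTheory Finset Filter
open scoped Classical ENNReal

/-- `l_i(S)`: the number of color-`i` edges with both endpoints in `S`. -/
noncomputable def innerCount {n m : ℕ} (ω : Sym2 (Fin n) → Fin (m + 1)) (i : Fin m)
    (S : Finset (Fin n)) : ℕ :=
  (Finset.univ.filter fun e : Sym2 (Fin n) =>
    ¬ e.IsDiag ∧ (∀ v ∈ e, v ∈ S) ∧ ω e = i.succ).card

/-- `o_i(S,T)` (and `E_i[v,S] = crossCount ω i {v} S`): the number of color-`i`
edges with one endpoint in `S` and the other in `T`. -/
noncomputable def crossCount {n m : ℕ} (ω : Sym2 (Fin n) → Fin (m + 1)) (i : Fin m)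
    (S T : Finset (Fin n)) : ℕ :=
  (Finset.univ.filter fun e : Sym2 (Fin n) =>
    ¬ e.IsDiag ∧ (∃ u ∈ S, ∃ v ∈ T, e = s(u, v)) ∧ ω e = i.succ).card

/-- The true community `A = {1, …, n/2}`. -/
def communityA (n : ℕ) : Finset (Fin n) := Finset.univ.filter fun v => (v : ℕ) < n / 2

/-- The weighted inner-edge score `∑ i (l_i(S) + l_i(Sᶜ)) log (p_i/q_i)` of the
balanced partition `(S, Sᶜ)`. -/
noncomputable def score {n m : ℕ} (p q : Fin m → ℝ) (ω : Sym2 (Fin n) → Fin (m + 1))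
    (S : Finset (Fin n)) : ℝ :=
  ∑ i, ((innerCount ω i S : ℝ) + (innerCount ω i Sᶜ : ℝ)) * Real.log (p i / q i)

/-! Put `Aw = A \ S` and `Bw = S \ A`. The partition `(S, Sᶜ)` arises from `(A, Aᶜ)` by exchanging
`Aw` and `Bw`, and every edge inside `A ∩ S`, `Aᶜ ∩ Sᶜ`, `Aw` or `Bw` is inner for both partitions.
Hence the score gained by passing to `(S, Sᶜ)` is exactly the weight of the edges joining the moved
sets to their new sides minus the weight of those joining them to their old sides. Since the score
of `(S, Sᶜ)` equals that of `(Sᶜ, S)`, we may swap `S` and `Sᶜ` to get `|Aw| ≤ n / 4`. -/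

lemma communityA_card (n : ℕ) : (communityA n).card = n / 2 := by
  simpa [communityA] using Fin.card_filter_val_lt (n := n) (m := n / 2)
    |>.trans (min_eq_right (Nat.div_le_self n 2))

lemma Sym2.exists_mem_mem_eq_mk_iff {α : Type*} (S T : Finset α) (a b : α) :
    (∃ u ∈ S, ∃ v ∈ T, s(a, b) = s(u, v)) ↔ a ∈ S ∧ b ∈ T ∨ b ∈ S ∧ a ∈ T := by
  constructor
  · rintro ⟨u, hu, v, hv, heq⟩
    rcases Sym2.eq_iff.mp heq with ⟨rfl, rfl⟩ | ⟨rfl, rfl⟩ <;> tauto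
  · rintro (⟨ha, hb⟩ | ⟨hb, ha⟩)
    exacts [⟨a, ha, b, hb, rfl⟩, ⟨b, hb, a, ha, Sym2.eq_swap⟩]

section
variable {n m : ℕ} (ω : Sym2 (Fin n) → Fin (m + 1)) (i : Fin m)

lemma crossCount_comm (S T : Finset (Fin n)) : crossCount ω i S T = crossCount ω i T S := by
  unfold crossCount
  congr 1
  ext e
  simp only [Finset.mem_filter, Finset.mem_univ, true_and]
  constructor <;> rintro ⟨h1, ⟨u, hu, v, hv, heq⟩, h3⟩ <;>
    exact ⟨h1, ⟨v, hv, u, hu, heq.trans Sym2.eq_swap⟩, h3⟩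

lemma innerCount_union {U V : Finset (Fin n)} (h : Disjoint U V) :
    innerCount ω i (U ∪ V) = innerCount ω i U + innerCount ω i V + crossCount ω i U V := by
  unfold innerCount crossCount
  simp only [Finset.card_filter, ← Finset.sum_add_distrib]
  refine Finset.sum_congr rfl fun e _ => ?_
  induction e using Sym2.ind with
  | _ a b =>
    have ha : a ∈ U → a ∉ V := fun hU => Finset.disjoint_left.mp h hU
    have hb : b ∈ U → b ∉ V := fun hU => Finset.disjoint_left.mp h hU
    simp only [Sym2.mem_iff, forall_eq_or_imp, forall_eq, Finset.mem_union,
      Sym2.exists_mem_mem_eq_mk_iff]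
    by_cases a ∈ U <;> by_cases a ∈ V <;> by_cases b ∈ U <;> by_cases b ∈ V <;> simp_all

lemma innerCount_exchange {X Y P Q : Finset (Fin n)} (hXP : Disjoint X P) (hXQ : Disjoint X Q)
    (hYP : Disjoint Y P) (hYQ : Disjoint Y Q) :
    innerCount ω i (X ∪ Q) + innerCount ω i (Y ∪ P) + (crossCount ω i P X + crossCount ω i Q Y) =
      innerCount ω i (X ∪ P) + innerCount ω i (Y ∪ Q) +
        (crossCount ω i P Y + crossCount ω i Q X) := by
  rw [innerCount_union ω i hXQ, innerCount_union ω i hYP, innerCount_union ω i hXP,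
    innerCount_union ω i hYQ, crossCount_comm ω i P X, crossCount_comm ω i Q Y,
    crossCount_comm ω i P Y, crossCount_comm ω i Q X]
  omega

lemma innerCount_exchange_sdiff (A T : Finset (Fin n)) :
    innerCount ω i T + innerCount ω i Tᶜ +
        (crossCount ω i (A \ T) (A \ (A \ T)) + crossCount ω i (T \ A) (Aᶜ \ (T \ A))) =
      innerCount ω i A + innerCount ω i Aᶜ +
        (crossCount ω i (A \ T) (Aᶜ \ (T \ A)) + crossCount ω i (T \ A) (A \ (A \ T))) := by
  have hT : A ∩ T ∪ T \ A = T := by ext; simp; tauto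
  have hTc : Aᶜ ∩ Tᶜ ∪ A \ T = Tᶜ := by ext; simp; tauto
  have hA : A ∩ T ∪ A \ T = A := by ext; simp; tauto
  have hAc : Aᶜ ∩ Tᶜ ∪ T \ A = Aᶜ := by ext; simp; tauto
  have hX : A ∩ T = A \ (A \ T) := sdiff_sdiff_right_self.symm
  have hY : Aᶜ ∩ Tᶜ = Aᶜ \ (T \ A) := by ext; simp; tauto
  have h := innerCount_exchange ω i (X := A ∩ T) (Y := Aᶜ ∩ Tᶜ) (P := A \ T) (Q := T \ A)
    ?_ ?_ ?_ ?_
  · rwa [hT, hTc, hA, hAc, hX, hY] at h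
  all_goals simp +contextual [Finset.disjoint_left]
end

section
variable {n m : ℕ} (p q : Fin m → ℝ) (ω : Sym2 (Fin n) → Fin (m + 1))

lemma score_compl (S : Finset (Fin n)) : score p q ω Sᶜ = score p q ω S := by
  simp only [score, compl_compl, add_comm]

lemma score_sub_score (A T : Finset (Fin n)) :
    score p q ω T - score p q ω A =
      ∑ i, ((crossCount ω i (A \ T) (Aᶜ \ (T \ A)) : ℝ) +
            (crossCount ω i (T \ A) (A \ (A \ T)) : ℝ)) * Real.log (p i / q i) -
      ∑ i, ((crossCount ω i (A \ T) (A \ (A \ T)) : ℝ) +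
            (crossCount ω i (T \ A) (Aᶜ \ (T \ A)) : ℝ)) * Real.log (p i / q i) := by
  simp only [score, ← Finset.sum_sub_distrib]
  refine Finset.sum_congr rfl fun i _ => ?_
  have h : ((_ : ℕ) : ℝ) = _ := congrArg Nat.cast (innerCount_exchange_sdiff ω i A T)
  push_cast at h
  linear_combination Real.log (p i / q i) * h

lemma exists_swap_sets_of_score_le {A T : Finset (Fin n)} {K : ℕ} (hcard : T.card = A.card)
    (hne : T ≠ A) (hK : (A \ T).card ≤ K) (hscore : score p q ω A ≤ score p q ω T) :
    ∃ k : ℕ, 1 ≤ k ∧ k ≤ K ∧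
      ∃ Aw Bw : Finset (Fin n), Aw ⊆ A ∧ Bw ⊆ Aᶜ ∧ Aw.card = k ∧ Bw.card = k ∧
        ∑ i, ((crossCount ω i Aw (Aᶜ \ Bw) : ℝ) +
              (crossCount ω i Bw (A \ Aw) : ℝ)) * Real.log (p i / q i) ≥
        ∑ i, ((crossCount ω i Aw (A \ Aw) : ℝ) +
              (crossCount ω i Bw (Aᶜ \ Bw) : ℝ)) * Real.log (p i / q i) := by
  have hpos : 0 < (A \ T).card := Finset.card_pos.mpr <| Finset.sdiff_nonempty.mpr fun hAT =>
    hne (Finset.eq_of_subset_of_card_le hAT hcard.le).symm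
  refine ⟨(A \ T).card, hpos, hK, A \ T, T \ A, Finset.sdiff_subset, ?_, rfl,
    Finset.card_sdiff_comm hcard, ?_⟩
  · simp +contextual [Finset.subset_iff]
  · have := score_sub_score p q ω A T
    rw [ge_iff_le, ← sub_nonneg]
    linarith
end

theorem exists_swap_sets_general (n m : ℕ) (hn : Even n)
    (p q : Fin m → ℝ)
    (ω : Sym2 (Fin n) → Fin (m + 1))
    (hF : ∃ S : Finset (Fin n), S.card = n / 2 ∧ S ≠ communityA n ∧
      S ≠ (communityA n)ᶜ ∧ score p q ω (communityA n) ≤ score p q ω S) :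
    ∃ k : ℕ, 1 ≤ k ∧ k ≤ n / 4 ∧
      ∃ Aw Bw : Finset (Fin n), Aw ⊆ communityA n ∧ Bw ⊆ (communityA n)ᶜ ∧
        Aw.card = k ∧ Bw.card = k ∧
        ∑ i, ((crossCount ω i Aw ((communityA n)ᶜ \ Bw) : ℝ) +
              (crossCount ω i Bw (communityA n \ Aw) : ℝ)) * Real.log (p i / q i) ≥
        ∑ i, ((crossCount ω i Aw (communityA n \ Aw) : ℝ) +
              (crossCount ω i Bw ((communityA n)ᶜ \ Bw) : ℝ)) * Real.log (p i / q i) := by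
  obtain ⟨S, hS, hSA, hSB, hscore⟩ := hF
  have hA := communityA_card n
  have hSc : Sᶜ.card = n / 2 := by
    rw [Finset.card_compl, Fintype.card_fin, hS]
    obtain ⟨k, rfl⟩ := hn
    omega
  have hsplit : (communityA n \ S).card + (communityA n \ Sᶜ).card = n / 2 := by
    rw [Finset.sdiff_eq_inter_compl _ Sᶜ, compl_compl, Finset.card_sdiff_add_card_inter, hA]
  rcases le_or_gt (communityA n \ S).card (n / 4) with hle | hgt
  · exact exists_swap_sets_of_score_le p q ω (hS.trans hA.symm) hSA hle hscore
  · refine exists_swap_sets_of_score_le p q ω (hSc.trans hA.symm) ?_ (by omega)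
      (by rwa [score_compl])
    exact fun h => hSB (compl_eq_comm.mp h).symm

theorem exists_swap_sets (n m : ℕ) (hn : Even n) (hm : 0 < m)
    (p q : Fin m → ℝ) (hp : ∀ i, 0 < p i) (hq : ∀ i, 0 < q i)
    (ω : Sym2 (Fin n) → Fin (m + 1))
    (hF : ∃ S : Finset (Fin n), S.card = n / 2 ∧ S ≠ communityA n ∧
      S ≠ (communityA n)ᶜ ∧ score p q ω (communityA n) ≤ score p q ω S) :
    ∃ k : ℕ, 1 ≤ k ∧ k ≤ n / 4 ∧
      ∃ Aw Bw : Finset (Fin n), Aw ⊆ communityA n ∧ Bw ⊆ (communityA n)ᶜ ∧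
        Aw.card = k ∧ Bw.card = k ∧
        ∑ i, ((crossCount ω i Aw ((communityA n)ᶜ \ Bw) : ℝ) +
              (crossCount ω i Bw (communityA n \ Aw) : ℝ)) * Real.log (p i / q i) ≥
        ∑ i, ((crossCount ω i Aw (communityA n \ Aw) : ℝ) +
              (crossCount ω i Bw ((communityA n)ᶜ \ Bw) : ℝ)) * Real.log (p i / q i) :=
  exists_swap_sets_general n m hn p q ω hF
end

section
/- (Lemma 1) There is a constant C > 0 depending only on α_1,…,α_m, β_1,…,β_m such that for all sufficiently large n and every positive integer N, if Z_1,…,Z_N and W_1,…,W_N are mutually independent with the Z_j i.i.d. distributed as Z and the W_j i.i.d. distributed as W, then Pr( ∑_{j=1}^{N} (Z_j − W_j) ≥ 0 ) ≤ 2 exp[ −N ( (log n / n) ∑_{i=1}^m (√α_i − √β_i)² − C (log n / n)² ) ]. -/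
/-!
Chernoff bound at exponent `1/2`. `Z` and `W` share the atoms `log (p_k/q_k)`, so
`E[exp(Z/2)] = 1 - ∑ q + ∑ √(p q)` and `E[exp(-W/2)] = 1 - ∑ p + ∑ √(p q)`; by `1 + x ≤ eˣ` their
product is at most `exp (-∑ (√p - √q)²)`, and independence raises it to the `N`-th power. This
already gives the bound without the second-order correction, so any `C > 0` works.
-/

open MeasureTheory Finset Filter
open scoped Classical ENNReal

/-- Law of `W`: value `log (p_k/q_k)` with probability `p_k`, `0` otherwise. -/
noncomputable def Wdist {m : ℕ} (p q : Fin m → ℝ) : Measure ℝ :=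
  (1 - ∑ k, ENNReal.ofReal (p k)) • Measure.dirac 0
    + ∑ k, ENNReal.ofReal (p k) • Measure.dirac (Real.log (p k / q k))
/-- Law of `Z`: value `log (p_k/q_k)` with probability `q_k`, `0` otherwise. -/
noncomputable def Zdist {m : ℕ} (p q : Fin m → ℝ) : Measure ℝ :=
  (1 - ∑ k, ENNReal.ofReal (q k)) • Measure.dirac 0
    + ∑ k, ENNReal.ofReal (q k) • Measure.dirac (Real.log (p k / q k))

section Chernoff

variable {E : Type*} [MeasurableSpace E]

lemma lintegral_pi_prod_eq_pow (μ : Measure E) [SigmaFinite μ] {g : E → ℝ≥0∞}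
    (hg : Measurable g) (N : ℕ) :
    ∫⁻ x : Fin N → E, ∏ i, g (x i) ∂Measure.pi (fun _ => μ) = (∫⁻ a, g a ∂μ) ^ N := by
  induction N with
  | zero => simp
  | succ N ih =>
    have hsplit := (measurePreserving_piFinSuccAbove (fun _ : Fin (N + 1) => μ) 0).symm
    rw [hsplit.lintegral_map_equiv (fun x : Fin (N + 1) → E => ∏ i, g (x i))]
    simp only [MeasurableEquiv.piFinSuccAbove_symm_apply, Fin.insertNthEquiv, Equiv.coe_fn_mk,
      Fin.insertNth_zero, Fin.prod_univ_succ, Fin.cons_zero, Fin.cons_succ, Fin.zero_succAbove,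
      cast_eq]
    have hprod : Measurable fun y : Fin N → E => ∏ i, g (y i) :=
      Finset.measurable_prod _ fun i _ => hg.comp (measurable_pi_apply i)
    rw [lintegral_prod_mul hg.aemeasurable hprod.aemeasurable, ih, pow_succ, mul_comm]

theorem measure_pi_sum_nonneg_le_pow (μ : Measure E) [SigmaFinite μ] {h : E → ℝ}
    (hh : Measurable h) {t : ℝ} (ht : 0 ≤ t) (N : ℕ) :
    Measure.pi (fun _ : Fin N => μ) {x | 0 ≤ ∑ j, h (x j)} ≤
      (∫⁻ a, ENNReal.ofReal (Real.exp (t * h a)) ∂μ) ^ N := by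
  set g : E → ℝ≥0∞ := fun a => ENNReal.ofReal (Real.exp (t * h a))
  have hg : Measurable g := by fun_prop
  have hsub : {x : Fin N → E | 0 ≤ ∑ j, h (x j)} ⊆ {x | 1 ≤ ∏ j, g (x j)} := by
    intro x hx
    have hprod : ∏ j, g (x j) = ENNReal.ofReal (Real.exp (t * ∑ j, h (x j))) := by
      rw [← ENNReal.ofReal_prod_of_nonneg fun j _ => (Real.exp_pos _).le, ← Real.exp_sum,
        Finset.mul_sum]
    simpa [hprod] using Real.one_le_exp (mul_nonneg ht hx)
  calc Measure.pi (fun _ : Fin N => μ) {x | 0 ≤ ∑ j, h (x j)}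
      ≤ 1 * Measure.pi (fun _ : Fin N => μ) {x | 1 ≤ ∏ j, g (x j)} := by
        rw [one_mul]; exact measure_mono hsub
    _ ≤ ∫⁻ x, ∏ j, g (x j) ∂Measure.pi (fun _ : Fin N => μ) :=
        mul_meas_ge_le_lintegral (Finset.measurable_prod _ fun j _ => hg.comp
          (measurable_pi_apply j)) 1
    _ = (∫⁻ a, g a ∂μ) ^ N := lintegral_pi_prod_eq_pow μ hg N

end Chernoff

lemma Real.exp_inv_two_mul_log {x : ℝ} (hx : 0 < x) : Real.exp (2⁻¹ * Real.log x) = √x := by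
  rw [Real.sqrt_eq_rpow, Real.rpow_def_of_pos hx, mul_comm, one_div]

lemma Real.mul_exp_inv_two_mul_log_div {p q : ℝ} (hp : 0 < p) (hq : 0 < q) :
    q * Real.exp (2⁻¹ * Real.log (p / q)) = √p * √q := by
  rw [Real.exp_inv_two_mul_log (div_pos hp hq), Real.sqrt_div hp.le, mul_div_left_comm,
    Real.div_sqrt]

section Distributions

variable {m : ℕ} (p q : Fin m → ℝ)

lemma lintegral_Zdist (g : ℝ → ℝ≥0∞) :
    ∫⁻ x, g x ∂(Zdist p q) = (1 - ∑ k, ENNReal.ofReal (q k)) * g 0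
      + ∑ k, ENNReal.ofReal (q k) * g (Real.log (p k / q k)) := by
  simp only [Zdist, lintegral_add_measure, lintegral_smul_measure, lintegral_finsetSum_measure,
    lintegral_dirac, smul_eq_mul]

lemma lintegral_Wdist_eq_lintegral_Zdist_neg (g : ℝ → ℝ≥0∞) :
    ∫⁻ x, g x ∂(Wdist p q) = ∫⁻ x, g (-x) ∂(Zdist q p) := by
  simp only [lintegral_Zdist, Wdist, lintegral_add_measure, lintegral_smul_measure,
    lintegral_finsetSum_measure, lintegral_dirac, smul_eq_mul, neg_zero, ← Real.log_inv,
    inv_div]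

instance Zdist.isFiniteMeasure : IsFiniteMeasure (Zdist p q) :=
  ⟨by simp [Zdist, ENNReal.sum_lt_top, tsub_le_self.trans_lt ENNReal.one_lt_top]⟩

instance Wdist.isFiniteMeasure : IsFiniteMeasure (Wdist p q) :=
  ⟨by simp [Wdist, ENNReal.sum_lt_top, tsub_le_self.trans_lt ENNReal.one_lt_top]⟩

variable {p q} (hp : ∀ k, 0 < p k) (hq : ∀ k, 0 < q k)
include hp hq

lemma lintegral_exp_half_Zdist_le (hq₁ : ∑ k, q k ≤ 1) :
    ∫⁻ z, ENNReal.ofReal (Real.exp (2⁻¹ * z)) ∂(Zdist p q) ≤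
      ENNReal.ofReal (Real.exp (∑ k, √(p k) * √(q k) - ∑ k, q k)) := by
  have hq₀ : ∀ k ∈ univ, 0 ≤ q k := fun k _ => (hq k).le
  have hterms : ∑ k, ENNReal.ofReal (q k) * ENNReal.ofReal (Real.exp (2⁻¹ * Real.log (p k / q k)))
      = ENNReal.ofReal (∑ k, √(p k) * √(q k)) := by
    rw [ENNReal.ofReal_sum_of_nonneg fun k _ => by positivity]
    refine Finset.sum_congr rfl fun k _ => ?_
    rw [← ENNReal.ofReal_mul (hq k).le, Real.mul_exp_inv_two_mul_log_div (hp k) (hq k)]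
  rw [lintegral_Zdist, hterms, mul_zero, Real.exp_zero, ENNReal.ofReal_one, mul_one,
    ← ENNReal.ofReal_sum_of_nonneg hq₀, ← ENNReal.ofReal_one, ← ENNReal.ofReal_sub _
      (Finset.sum_nonneg hq₀), ← ENNReal.ofReal_add (by linarith) (by positivity)]
  have hexp := Real.add_one_le_exp (∑ k, √(p k) * √(q k) - ∑ k, q k)
  exact ENNReal.ofReal_le_ofReal (by linarith)

lemma lintegral_exp_half_sub_Zdist_prod_Wdist_le (hp₁ : ∑ k, p k ≤ 1) (hq₁ : ∑ k, q k ≤ 1) :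
    ∫⁻ z, ENNReal.ofReal (Real.exp (2⁻¹ * (z.1 - z.2))) ∂((Zdist p q).prod (Wdist p q)) ≤
      ENNReal.ofReal (Real.exp (-∑ k, (√(p k) - √(q k)) ^ 2)) := by
  have hsplit : ∀ z : ℝ × ℝ, ENNReal.ofReal (Real.exp (2⁻¹ * (z.1 - z.2))) =
      ENNReal.ofReal (Real.exp (2⁻¹ * z.1)) * ENNReal.ofReal (Real.exp (2⁻¹ * -z.2)) := by
    intro z
    rw [← ENNReal.ofReal_mul (Real.exp_pos _).le, ← Real.exp_add, mul_sub, mul_neg, sub_eq_add_neg]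
  have hsq : -∑ k, (√(p k) - √(q k)) ^ 2 =
      (∑ k, √(p k) * √(q k) - ∑ k, q k) + (∑ k, √(q k) * √(p k) - ∑ k, p k) := by
    have hterm : ∀ k, (√(p k) - √(q k)) ^ 2 = p k + q k - 2 * (√(p k) * √(q k)) := fun k => by
      rw [sub_sq, Real.sq_sqrt (hp k).le, Real.sq_sqrt (hq k).le]; ring
    simp only [hterm, Finset.sum_sub_distrib, Finset.sum_add_distrib, ← Finset.mul_sum,
      mul_comm (√(q _))]
    ring
  rw [lintegral_congr hsplit, lintegral_prod_mul (f := fun x => ENNReal.ofReal (Real.exp (2⁻¹ * x)))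
    (g := fun x => ENNReal.ofReal (Real.exp (2⁻¹ * -x))) (by fun_prop) (by fun_prop),
    lintegral_Wdist_eq_lintegral_Zdist_neg, hsq, Real.exp_add,
    ENNReal.ofReal_mul (Real.exp_pos _).le]
  simp only [neg_neg]
  exact mul_le_mul' (lintegral_exp_half_Zdist_le hp hq hq₁)
    (lintegral_exp_half_Zdist_le hq hp hp₁)

theorem measure_pi_Zdist_prod_Wdist_sum_sub_nonneg_le (hp₁ : ∑ k, p k ≤ 1)
    (hq₁ : ∑ k, q k ≤ 1) (N : ℕ) :
    Measure.pi (fun _ : Fin N => (Zdist p q).prod (Wdist p q))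
        {f | (0 : ℝ) ≤ ∑ j, ((f j).1 - (f j).2)} ≤
      ENNReal.ofReal (Real.exp (-(N : ℝ) * ∑ k, (√(p k) - √(q k)) ^ 2)) := by
  calc _ ≤ (∫⁻ z, ENNReal.ofReal (Real.exp (2⁻¹ * (z.1 - z.2)))
          ∂((Zdist p q).prod (Wdist p q))) ^ N :=
        measure_pi_sum_nonneg_le_pow _ (by fun_prop) (by norm_num) N
    _ ≤ ENNReal.ofReal (Real.exp (-∑ k, (√(p k) - √(q k)) ^ 2)) ^ N :=
        pow_le_pow_left' (lintegral_exp_half_sub_Zdist_prod_Wdist_le hp hq hp₁ hq₁) N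
    _ = _ := by
        rw [← ENNReal.ofReal_pow (Real.exp_pos _).le, ← Real.exp_nat_mul, neg_mul_comm]

end Distributions

lemma sum_sq_sqrt_mul_sub_sqrt_mul {m : ℕ} (a b : Fin m → ℝ) {L : ℝ} (hL : 0 ≤ L) :
    ∑ k, (√(a k * L) - √(b k * L)) ^ 2 = L * ∑ k, (√(a k) - √(b k)) ^ 2 := by
  simp only [Real.sqrt_mul' _ hL, ← sub_mul, mul_pow, Real.sq_sqrt hL, mul_comm L, Finset.sum_mul]

lemma eventually_sum_mul_log_div_le_one {m : ℕ} (a : Fin m → ℝ) :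
    ∀ᶠ n : ℕ in atTop, ∑ k, a k * Real.log n / n ≤ 1 := by
  have hlog : Tendsto (fun n : ℕ => Real.log n / n) atTop (nhds 0) :=
    Real.isLittleO_log_id_atTop.tendsto_div_nhds_zero.comp tendsto_natCast_atTop_atTop
  have hsum := (hlog.const_mul (∑ k, a k)).eventually_le_const (by norm_num : (∑ k, a k) * 0 < 1)
  filter_upwards [hsum] with n hn
  simpa only [Finset.sum_mul, mul_div_assoc] using hn

theorem lemma1_general (m : ℕ) (α β : Fin m → ℝ)
    (hα : ∀ i, 0 < α i) (hβ : ∀ i, 0 < β i) :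
    ∃ C : ℝ, 0 < C ∧ ∃ N₀ : ℕ, ∀ n : ℕ, N₀ ≤ n → ∀ N : ℕ, 1 ≤ N →
      Measure.pi (fun _ : Fin N =>
          (Zdist (fun i => α i * Real.log n / n) (fun i => β i * Real.log n / n)).prod
            (Wdist (fun i => α i * Real.log n / n) (fun i => β i * Real.log n / n)))
        {f | (0 : ℝ) ≤ ∑ j, ((f j).1 - (f j).2)} ≤
      ENNReal.ofReal (2 * Real.exp (-(N : ℝ) *
        (Real.log n / n * ∑ i, (Real.sqrt (α i) - Real.sqrt (β i)) ^ 2 -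
          C * (Real.log n / n) ^ 2))) := by
  refine ⟨1, one_pos, ?_⟩
  obtain ⟨N₀, hN₀⟩ := eventually_atTop.mp ((eventually_ge_atTop 2).and
    ((eventually_sum_mul_log_div_le_one α).and (eventually_sum_mul_log_div_le_one β)))
  refine ⟨N₀, fun n hn N _ => ?_⟩
  obtain ⟨hn₂, hα₁, hβ₁⟩ := hN₀ n hn
  have hn₂' : (2 : ℝ) ≤ n := by exact_mod_cast hn₂
  have hL : 0 < Real.log n / n := div_pos (Real.log_pos (by linarith)) (by linarith)
  have hpos : ∀ a : Fin m → ℝ, (∀ i, 0 < a i) → ∀ i, 0 < a i * Real.log n / n :=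
    fun a ha i => by rw [mul_div_assoc]; exact mul_pos (ha i) hL
  refine (measure_pi_Zdist_prod_Wdist_sum_sub_nonneg_le (hpos α hα) (hpos β hβ) hα₁ hβ₁
    N).trans (ENNReal.ofReal_le_ofReal ?_)
  simp only [mul_div_assoc]
  rw [sum_sq_sqrt_mul_sub_sqrt_mul α β hL.le]
  generalize Real.log n / n = L at hL ⊢
  have hexp : Real.exp (-(N : ℝ) * (L * ∑ i, (√(α i) - √(β i)) ^ 2)) ≤
      Real.exp (-(N : ℝ) * (L * ∑ i, (√(α i) - √(β i)) ^ 2 - 1 * L ^ 2)) :=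
    Real.exp_le_exp.mpr (by nlinarith [sq_nonneg L, (Nat.cast_nonneg N : (0 : ℝ) ≤ N)])
  linarith [Real.exp_pos (-(N : ℝ) * (L * ∑ i, (√(α i) - √(β i)) ^ 2 - 1 * L ^ 2))]

theorem lemma1 (m : ℕ) (hm : 0 < m) (α β : Fin m → ℝ)
    (hα : ∀ i, 0 < α i) (hβ : ∀ i, 0 < β i) (hne : ∃ i, α i ≠ β i) :
    ∃ C : ℝ, 0 < C ∧ ∃ N₀ : ℕ, ∀ n : ℕ, N₀ ≤ n → ∀ N : ℕ, 1 ≤ N →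
      Measure.pi (fun _ : Fin N =>
          (Zdist (fun i => α i * Real.log n / n) (fun i => β i * Real.log n / n)).prod
            (Wdist (fun i => α i * Real.log n / n) (fun i => β i * Real.log n / n)))
        {f | (0 : ℝ) ≤ ∑ j, ((f j).1 - (f j).2)} ≤
      ENNReal.ofReal (2 * Real.exp (-(N : ℝ) *
        (Real.log n / n * ∑ i, (Real.sqrt (α i) - Real.sqrt (β i)) ^ 2 -
          C * (Real.log n / n) ^ 2))) :=
  lemma1_general m α β hα hβ
end

section
/- (Cramér's theorem, upper bound) Let X, X_1, X_2, … be i.i.d. real-valued random variables with finite support, and let I(x) = sup_{θ∈ℝ} (θx − log E[e^{θX}]). Then for every nonempty closed set F ⊆ ℝ and every positive integer n, Pr( (1/n) ∑_{i=1}^n X_i ∈ F ) ≤ 2 exp( −n · inf_{x∈F} I(x) ). -/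
open MeasureTheory Finset Filter
open scoped Classical ENNReal

open ProbabilityTheory Real

/-!
Write `Λ = cgf id μ`, `m` for the mean and `S` for the sum of the `n` coordinates. Markov's
inequality for `exp (θ S)` bounds the event `θ n b ≤ θ S` by `exp (-n (θ b - Λ θ))`, for every `θ`.
By Jensen `θ m ≤ Λ θ`, so a `θ` with `θ b - Λ θ > 0` has the sign of `b - m`, and then this event
contains `{S ≥ n b}` if `b ≥ m` and `{S ≤ n b}` if `b ≤ m`. Split `F` at `m`: the part above `m`
lies above its infimum `b`, the part below below its supremum `a`, and `a, b ∈ F` as `F` is closed.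
Letting `θ b - Λ θ` approach `I b ≥ c` (and likewise at `a`) bounds each half by `exp (-n c)`.
-/

noncomputable def rateFunction (μ : Measure ℝ) (x : ℝ) : ℝ≥0∞ :=
  ⨆ θ : ℝ, ENNReal.ofReal (θ * x - cgf id μ θ)

lemma integrable_of_ae_mem_finset {α E : Type*} [MeasurableSpace α] [NormedAddCommGroup E]
    {μ : Measure α} [IsFiniteMeasure μ] {s : Finset α} (hs : μ (↑s : Set α)ᶜ = 0) {f : α → E}
    (hf : AEStronglyMeasurable f μ) : Integrable f μ := by
  refine .of_bound hf (∑ y ∈ s, ‖f y‖) ?_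
  filter_upwards [measure_eq_zero_iff_ae_notMem.1 hs] with x hx
  exact single_le_sum (fun y _ => norm_nonneg (f y)) (by simpa using hx)

lemma le_of_forall_lt_of_continuousAt {β : Type*} [TopologicalSpace β] [Preorder β]
    [ClosedIciTopology β] {f : ℝ → β} {p : β} {c : ℝ} (hf : ContinuousAt f c)
    (h : ∀ t < c, p ≤ f t) : p ≤ f c :=
  ge_of_tendsto (hf.mono_left (nhdsWithin_le_nhds (s := Set.Iio c)))
    (eventually_nhdsWithin_of_forall h)

lemma mul_integral_le_cgf {Ω : Type*} [MeasurableSpace Ω] {μ : Measure Ω} [IsProbabilityMeasure μ]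
    {X : Ω → ℝ} {θ : ℝ} (hX : Integrable X μ) (hθ : Integrable (fun ω => exp (θ * X ω)) μ) :
    θ * ∫ ω, X ω ∂μ ≤ cgf X μ θ := by
  rw [← integral_const_mul, cgf, le_log_iff_exp_le (mgf_pos hθ)]
  exact convexOn_exp.map_integral_le continuousOn_exp isClosed_univ (by simp) (hX.const_mul θ) hθ

lemma measureReal_mul_le_mul_le_exp_cgf {Ω : Type*} [MeasurableSpace Ω] {μ : Measure Ω}
    [IsFiniteMeasure μ] {X : Ω → ℝ} (θ ε : ℝ) (hθ : Integrable (fun ω => exp (θ * X ω)) μ) :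
    μ.real {ω | θ * ε ≤ θ * X ω} ≤ exp (-(θ * ε) + cgf X μ θ) := by
  simpa only [cgf, mgf, one_mul, neg_mul] using
    measure_ge_le_exp_cgf (X := fun ω => θ * X ω) (θ * ε) zero_le_one (by simpa only [one_mul])

section Sum

variable {ι : Type*} [Fintype ι] {μ : Measure ℝ} [IsProbabilityMeasure μ] {θ : ℝ}

lemma integrable_exp_mul_eval (hθ : Integrable (fun y => exp (θ * y)) μ) (i : ι) :
    Integrable (fun x : ι → ℝ => exp (θ * x i)) (Measure.pi fun _ => μ) :=
  ((measurePreserving_eval _ i).integrable_comp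
    (g := fun y => exp (θ * y)) (by fun_prop)).2 hθ

lemma cgf_eval (i : ι) :
    cgf (fun x : ι → ℝ => x i) (Measure.pi fun _ => μ) θ = cgf id μ θ := by
  rw [cgf, cgf, ← mgf_id_map (measurable_pi_apply i).aemeasurable,
    (measurePreserving_eval _ i).map_eq]

lemma iIndepFun_eval : iIndepFun (fun (i : ι) (x : ι → ℝ) => x i) (Measure.pi fun _ => μ) :=
  iIndepFun_pi (X := fun _ => id) fun _ => aemeasurable_id

lemma integrable_exp_mul_sum_pi (hθ : Integrable (fun y => exp (θ * y)) μ) :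
    Integrable (fun x : ι → ℝ => exp (θ * ∑ i, x i)) (Measure.pi fun _ => μ) := by
  simpa only [Finset.sum_apply] using (iIndepFun_eval (ι := ι) (μ := μ)).integrable_exp_mul_sum
    measurable_pi_apply fun i _ => integrable_exp_mul_eval hθ i

lemma cgf_sum_pi (hθ : Integrable (fun y => exp (θ * y)) μ) :
    cgf (fun x : ι → ℝ => ∑ i, x i) (Measure.pi fun _ => μ) θ = Fintype.card ι * cgf id μ θ := by
  have := (iIndepFun_eval (ι := ι) (μ := μ)).cgf_sum measurable_pi_apply (s := univ)
    fun i _ => integrable_exp_mul_eval hθ i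
  simpa only [Finset.sum_fn, cgf_eval, sum_const, card_univ, nsmul_eq_mul] using this

end Sum

section Mean

variable {μ : Measure ℝ} [IsProbabilityMeasure μ]

lemma mul_integral_le_cgf_id (hμ : ∀ θ, Integrable (fun y => exp (θ * y)) μ) (θ : ℝ) :
    θ * ∫ y, y ∂μ ≤ cgf id μ θ :=
  mul_integral_le_cgf (integrable_of_mem_interior_integrableExpSet (by simp [integrableExpSet, hμ]))
    (hμ θ)

variable {ι : Type*} [Fintype ι] [Nonempty ι]

lemma measure_mean_mem_le (hμ : ∀ θ, Integrable (fun y => exp (θ * y)) μ) {G : Set ℝ} {b c : ℝ}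
    (hG : ∀ θ, cgf id μ θ < θ * b → ∀ y ∈ G, θ * b ≤ θ * y)
    (hc : ENNReal.ofReal c ≤ rateFunction μ b) :
    Measure.pi (fun _ : ι => μ) {x | (∑ i, x i) / Fintype.card ι ∈ G} ≤
      ENNReal.ofReal (exp (-Fintype.card ι * c)) := by
  set N : ℝ := (Fintype.card ι : ℝ)
  have hN : 0 < N := Nat.cast_pos.2 Fintype.card_pos
  refine le_of_forall_lt_of_continuousAt (f := fun t => ENNReal.ofReal (exp (-N * t)))
    (ENNReal.continuous_ofReal.comp (by fun_prop)).continuousAt fun t ht => ?_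
  rcases lt_or_ge t 0 with ht0 | ht0
  · exact prob_le_one.trans (ENNReal.one_le_ofReal.2 (one_le_exp (by nlinarith)))
  obtain ⟨θ, hθ⟩ : ∃ θ, t < θ * b - cgf id μ θ := by
    obtain ⟨θ, hθ⟩ := lt_iSup_iff.1
      (((ENNReal.ofReal_lt_ofReal_iff (ht0.trans_lt ht)).2 ht).trans_le hc)
    exact ⟨θ, (ENNReal.ofReal_lt_ofReal_iff'.1 hθ).1⟩
  have hevent : {x : ι → ℝ | (∑ i, x i) / N ∈ G} ⊆ {x | θ * (N * b) ≤ θ * ∑ i, x i} := by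
    intro x hx
    calc θ * (N * b) = N * (θ * b) := by ring
      _ ≤ N * (θ * ((∑ i, x i) / N)) :=
        mul_le_mul_of_nonneg_left (hG θ (by linarith) _ hx) hN.le
      _ = θ * ∑ i, x i := by field_simp
  calc _ ≤ _ := measure_mono hevent
    _ = ENNReal.ofReal ((Measure.pi fun _ : ι => μ).real _) :=
      (ofReal_measureReal (measure_ne_top _ _)).symm
    _ ≤ ENNReal.ofReal (exp (-(θ * (N * b)) +
          cgf (fun x : ι → ℝ => ∑ i, x i) (Measure.pi fun _ => μ) θ)) :=
      ENNReal.ofReal_le_ofReal <|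
        measureReal_mul_le_mul_le_exp_cgf _ _ (integrable_exp_mul_sum_pi (hμ θ))
    _ ≤ _ := by rw [cgf_sum_pi (hμ θ)]; gcongr; nlinarith

lemma measure_mean_mem_inter_Ici_le (hμ : ∀ θ, Integrable (fun y => exp (θ * y)) μ) {F : Set ℝ}
    (hF : IsClosed F) {c : ℝ} (hc : ENNReal.ofReal c ≤ ⨅ x ∈ F, rateFunction μ x) :
    Measure.pi (fun _ : ι => μ) {x | (∑ i, x i) / Fintype.card ι ∈ F ∩ Set.Ici (∫ y, y ∂μ)} ≤
      ENNReal.ofReal (exp (-Fintype.card ι * c)) := by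
  obtain hempty | hne := (F ∩ Set.Ici (∫ y, y ∂μ)).eq_empty_or_nonempty
  · simp [hempty]
  have hbdd : BddBelow (F ∩ Set.Ici (∫ y, y ∂μ)) := ⟨_, fun _ hy => hy.2⟩
  have hb := (hF.inter isClosed_Ici).csInf_mem hne hbdd
  refine measure_mean_mem_le hμ (fun θ hθ y hy => ?_) (hc.trans (iInf₂_le _ hb.1))
  have : 0 ≤ θ := by nlinarith [mul_integral_le_cgf_id hμ θ, Set.mem_Ici.1 hb.2]
  exact mul_le_mul_of_nonneg_left (csInf_le hbdd hy) this

lemma measure_mean_mem_inter_Iic_le (hμ : ∀ θ, Integrable (fun y => exp (θ * y)) μ) {F : Set ℝ}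
    (hF : IsClosed F) {c : ℝ} (hc : ENNReal.ofReal c ≤ ⨅ x ∈ F, rateFunction μ x) :
    Measure.pi (fun _ : ι => μ) {x | (∑ i, x i) / Fintype.card ι ∈ F ∩ Set.Iic (∫ y, y ∂μ)} ≤
      ENNReal.ofReal (exp (-Fintype.card ι * c)) := by
  obtain hempty | hne := (F ∩ Set.Iic (∫ y, y ∂μ)).eq_empty_or_nonempty
  · simp [hempty]
  have hbdd : BddAbove (F ∩ Set.Iic (∫ y, y ∂μ)) := ⟨_, fun _ hy => hy.2⟩
  have ha := (hF.inter isClosed_Iic).csSup_mem hne hbdd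
  refine measure_mean_mem_le hμ (fun θ hθ y hy => ?_) (hc.trans (iInf₂_le _ ha.1))
  have : θ ≤ 0 := by nlinarith [mul_integral_le_cgf_id hμ θ, Set.mem_Iic.1 ha.2]
  exact mul_le_mul_of_nonpos_left (le_csSup hbdd hy) this

end Mean

theorem cramer_upper_general (μ : Measure ℝ) [IsProbabilityMeasure μ]
    (hfin : ∃ s : Finset ℝ, μ (↑s : Set ℝ)ᶜ = 0)
    (I : ℝ → ℝ≥0∞)
    (hI : ∀ x, I x =
      ⨆ θ : ℝ, ENNReal.ofReal (θ * x - Real.log (∫ y, Real.exp (θ * y) ∂μ)))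
    (F : Set ℝ) (hF : IsClosed F)
    (n : ℕ) (hn : 0 < n) (c : ℝ) (hc : ENNReal.ofReal c ≤ ⨅ x ∈ F, I x) :
    Measure.pi (fun _ : Fin n => μ) {x | (∑ i, x i) / n ∈ F} ≤
      2 * ENNReal.ofReal (Real.exp (-(n : ℝ) * c)) := by
  obtain ⟨s, hs⟩ := hfin
  have hμ : ∀ θ, Integrable (fun y => exp (θ * y)) μ :=
    fun θ => integrable_of_ae_mem_finset hs (by fun_prop)
  obtain rfl : I = rateFunction μ := funext hI
  have : Nonempty (Fin n) := ⟨⟨0, hn⟩⟩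
  set m := ∫ y, y ∂μ
  have hsplit : {x : Fin n → ℝ | (∑ i, x i) / n ∈ F} ⊆
      {x | (∑ i, x i) / n ∈ F ∩ Set.Iic m} ∪ {x | (∑ i, x i) / n ∈ F ∩ Set.Ici m} :=
    fun x hx => (le_total _ m).imp (⟨hx, ·⟩) (⟨hx, ·⟩)
  calc _ ≤ _ := (measure_mono hsplit).trans (measure_union_le _ _)
    _ ≤ ENNReal.ofReal (exp (-(n : ℝ) * c)) + ENNReal.ofReal (exp (-(n : ℝ) * c)) := by
      have hIic := measure_mean_mem_inter_Iic_le (ι := Fin n) hμ hF hc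
      have hIci := measure_mean_mem_inter_Ici_le (ι := Fin n) hμ hF hc
      rw [Fintype.card_fin] at hIic hIci
      exact add_le_add hIic hIci
    _ = _ := (two_mul _).symm

theorem cramer_upper (μ : Measure ℝ) [IsProbabilityMeasure μ]
    (hfin : ∃ s : Finset ℝ, μ (↑s : Set ℝ)ᶜ = 0)
    (I : ℝ → ℝ≥0∞)
    (hI : ∀ x, I x =
      ⨆ θ : ℝ, ENNReal.ofReal (θ * x - Real.log (∫ y, Real.exp (θ * y) ∂μ)))
    (F : Set ℝ) (hF : IsClosed F) (hFne : F.Nonempty)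
    (n : ℕ) (hn : 0 < n) (c : ℝ) (hc : ENNReal.ofReal c ≤ ⨅ x ∈ F, I x) :
    Measure.pi (fun _ : Fin n => μ) {x | (∑ i, x i) / n ∈ F} ≤
      2 * ENNReal.ofReal (Real.exp (-(n : ℝ) * c)) :=
  cramer_upper_general μ hfin I hI F hF n hn c hc
end

section
/- (Cramér's theorem, lower bound) Let Y, Y_1, Y_2, … be i.i.d. real-valued random variables with finite support such that Y takes some positive value and some negative value each with positive probability. Let Λ(λ) = log E[e^{λY}], let η be a point where Λ attains its (finite) minimum, let X̃ be the tilted random variable with law proportional to e^{ηy} times the law of Y, and let σ² be the variance of X̃. Then for every ε > 0 and every positive integer n, Pr( (1/n) ∑_{i=1}^n Y_i ∈ (−ε, ε) ) ≥ exp[ −n ( −Λ(η) + ε|η| ) ] · ( 1 − σ²/(n ε²) ). -/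
/-!
Tilt `μ` by `e^{η y}`. As `η` minimises `Λ`, the tilted law has mean `Λ'(η) = 0`, and its variance
is `σ²`, so by Chebyshev the `n`-fold tilted product gives `|∑ yᵢ| < n ε` probability at least
`1 - σ² / (n ε²)`. The density of `μ^⊗n` with respect to that product is `e^{n Λ(η) - η ∑ yᵢ}`,
which on this event is at least `e^{n Λ(η) - n ε |η|}`.
-/

open MeasureTheory ProbabilityTheory Finset Filter
open scoped Classical ENNReal

lemma integrable_of_measure_compl_finset_eq_zero {α E : Type*} [MeasurableSpace α]
    [MeasurableSingletonClass α] [NormedAddCommGroup E] {μ : Measure α} [IsFiniteMeasure μ]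
    {s : Finset α} (hs : μ (↑s : Set α)ᶜ = 0) (f : α → E) : Integrable f μ := by
  rw [← Measure.restrict_eq_self_of_ae_mem (ae_iff.mpr hs)]
  exact IntegrableOn.finset

lemma integral_tilted_eq_zero_of_isLocalMin_cgf {Ω : Type*} [MeasurableSpace Ω] {μ : Measure Ω}
    {X : Ω → ℝ} {η : ℝ} (hη : η ∈ interior (integrableExpSet X μ))
    (hmin : IsLocalMin (cgf X μ) η) : (μ.tilted (η * X ·))[X] = 0 := by
  rw [integral_tilted_mul_self hη, hmin.deriv_eq_zero]

section Pi

variable {ι : Type*} [Fintype ι] {α : ι → Type*} [∀ i, MeasurableSpace (α i)]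
  {μ : ∀ i, Measure (α i)} [∀ i, IsProbabilityMeasure (μ i)]

lemma lintegral_pi_prod_eq_prod {f : ∀ i, α i → ℝ≥0∞} (hf : ∀ i, Measurable (f i)) :
    ∫⁻ x, ∏ i, f i (x i) ∂Measure.pi μ = ∏ i, ∫⁻ y, f i y ∂μ i := by
  rw [lintegral_prod_eq_prod_lintegral_of_indepFun _ _
    (iIndepFun_pi fun i => (hf i).aemeasurable) fun i => (hf i).comp (measurable_pi_apply i)]
  exact Finset.prod_congr rfl fun i _ => (measurePreserving_eval μ i).lintegral_comp (hf i)

lemma Measure.pi_withDensity {f : ∀ i, α i → ℝ≥0∞} (hf : ∀ i, Measurable (f i))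
    [∀ i, SigmaFinite ((μ i).withDensity (f i))] :
    Measure.pi (fun i => (μ i).withDensity (f i)) =
      (Measure.pi μ).withDensity fun x => ∏ i, f i (x i) := by
  refine Measure.pi_eq fun s hs => ?_
  have hbox : (Set.univ.pi s).indicator (fun x => ∏ i, f i (x i)) =
      fun x => ∏ i, (s i).indicator (f i) (x i) := by
    ext x
    by_cases hx : x ∈ Set.univ.pi s
    · simp_all [Set.indicator_of_mem]
    · obtain ⟨i, hi⟩ : ∃ i, x i ∉ s i := by simpa using hx
      rw [Set.indicator_of_notMem hx, Finset.prod_eq_zero (Finset.mem_univ i)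
        (Set.indicator_of_notMem hi _)]
  rw [withDensity_apply _ (.univ_pi hs), ← lintegral_indicator (.univ_pi hs), hbox,
    lintegral_pi_prod_eq_prod fun i => (hf i).indicator (hs i)]
  exact Finset.prod_congr rfl fun i _ => by
    rw [withDensity_apply _ (hs i), lintegral_indicator (hs i)]

end Pi

open Real in
lemma pi_eq_withDensity_pi_tilted {μ : Measure ℝ} [IsProbabilityMeasure μ] {η : ℝ}
    (hη : Integrable (fun y => exp (η * y)) μ) (n : ℕ) :
    Measure.pi (fun _ : Fin n => μ) = (Measure.pi fun _ => μ.tilted (η * ·)).withDensity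
      fun x => ENNReal.ofReal (exp (n * cgf id μ η - η * ∑ i, x i)) := by
  have : IsProbabilityMeasure (μ.tilted (η * ·)) := isProbabilityMeasure_tilted hη
  have hZ : ∫ y, exp (-(η * y)) ∂μ.tilted (η * ·) = exp (-cgf id μ η) := by
    rw [integral_exp_tilted, exp_neg, exp_cgf (X := id) hη]
    simp [mgf]
  conv_lhs => rw [← tilted_neg_same hη]
  rw [Measure.tilted, Measure.pi_withDensity fun _ => by fun_prop]
  congr 1
  funext x
  simp only [Pi.neg_apply, hZ, ← exp_sub]
  rw [← ENNReal.ofReal_prod_of_nonneg fun _ _ => (exp_pos _).le, ← exp_sum]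
  congr 2
  simp only [Finset.sum_sub_distrib, Finset.sum_neg_distrib, Finset.mul_sum, Finset.sum_const,
    Finset.card_univ, Fintype.card_fin, nsmul_eq_mul]
  ring

open Real in
lemma ofReal_exp_mul_pi_tilted_le_pi {μ : Measure ℝ} [IsProbabilityMeasure μ] {η : ℝ}
    (hη : Integrable (fun y => exp (η * y)) μ) {n : ℕ} {A : Set (Fin n → ℝ)}
    (hA : MeasurableSet A) {a : ℝ} (haA : ∀ x ∈ A, η * ∑ i, x i ≤ a) :
    ENNReal.ofReal (exp (n * cgf id μ η - a)) * Measure.pi (fun _ => μ.tilted (η * ·)) A ≤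
      Measure.pi (fun _ => μ) A := by
  rw [pi_eq_withDensity_pi_tilted hη n, withDensity_apply _ hA, ← setLIntegral_const]
  exact setLIntegral_mono (by fun_prop) fun x hx =>
    ENNReal.ofReal_le_ofReal (exp_le_exp.2 (by linarith [haA x hx]))

lemma ofReal_one_sub_le_pi_sum_div_mem_Ioo {ν : Measure ℝ} [IsProbabilityMeasure ν]
    (h2 : MemLp id 2 ν) {n : ℕ} (hn : 0 < n) {ε : ℝ} (hε : 0 < ε) :
    ENNReal.ofReal (1 - Var[id; ν] / (n * ε ^ 2)) ≤
      Measure.pi (fun _ : Fin n => ν) {x | (∑ i, x i) / n ∈ Set.Ioo (ν[id] - ε) (ν[id] + ε)} := by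
  -- a sum of functions, the shape `variance_sum_pi` is stated for
  set S : (Fin n → ℝ) → ℝ := ∑ i, fun x => id (x i)
  have hS : ∀ x, S x = ∑ i, x i := fun x => by simp [S]
  have hn' : (0 : ℝ) < n := Nat.cast_pos.2 hn
  have hmemS : MemLp S 2 (Measure.pi fun _ => ν) :=
    memLp_finsetSum' _ fun i _ => h2.comp_measurePreserving (measurePreserving_eval _ i)
  have hvar : Var[S; Measure.pi fun _ => ν] = n * Var[id; ν] := by
    rw [variance_sum_pi fun _ => h2]
    simp
  have hmean : (Measure.pi fun _ => ν)[S] = (n : ℝ) * ν[id] := by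
    simp_rw [hS]
    rw [integral_finsetSum _ fun i _ =>
      integrable_eval (μ := fun _ => ν) (h2.integrable one_le_two)]
    simp [integral_eval]
  have hcompl : {x : Fin n → ℝ | (∑ i, x i) / n ∈ Set.Ioo (ν[id] - ε) (ν[id] + ε)}ᶜ =
      {x | (n : ℝ) * ε ≤ |S x - (Measure.pi fun _ => ν)[S]|} := by
    ext x
    have : S x - (n : ℝ) * ν[id] = n * ((∑ i, x i) / n - ν[id]) := by rw [hS]; field_simp
    simp only [Set.mem_compl_iff, Set.mem_ofPred_eq, ← Real.ball_eq_Ioo, Metric.mem_ball,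
      Real.dist_eq, not_lt, hmean, this, abs_mul, abs_of_pos hn']
    exact (mul_le_mul_iff_of_pos_left hn').symm
  have hA : MeasurableSet {x : Fin n → ℝ | (∑ i, x i) / n ∈ Set.Ioo (ν[id] - ε) (ν[id] + ε)} :=
    (by fun_prop : Measurable fun x : Fin n → ℝ => (∑ i, x i) / n) measurableSet_Ioo
  have hcheb := meas_ge_le_variance_div_sq hmemS (mul_pos hn' hε)
  rw [← hcompl, prob_compl_eq_one_sub hA, hvar,
    show n * Var[id; ν] / (n * ε) ^ 2 = Var[id; ν] / (n * ε ^ 2) by field_simp] at hcheb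
  rw [ENNReal.ofReal_sub _ (div_nonneg (variance_nonneg _ _) (by positivity)), ENNReal.ofReal_one]
  exact tsub_le_iff_tsub_le.mp hcheb

lemma mul_le_of_div_mem_Ioo {y c ε η : ℝ} (hc : 0 < c) (hy : y / c ∈ Set.Ioo (-ε) ε) :
    η * y ≤ c * (ε * |η|) := by
  obtain ⟨hlo, hhi⟩ := hy
  rw [lt_div_iff₀ hc] at hlo
  rw [div_lt_iff₀ hc] at hhi
  calc η * y ≤ |η| * |y| := abs_mul η y ▸ le_abs_self _
    _ ≤ |η| * (c * ε) := by gcongr; exact abs_le.2 ⟨by linarith, by linarith⟩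
    _ = c * (ε * |η|) := by ring

theorem cramer_lower_general (μ : Measure ℝ) [IsProbabilityMeasure μ]
    (hfin : ∃ s : Finset ℝ, μ (↑s : Set ℝ)ᶜ = 0)
    (Λ : ℝ → ℝ) (hΛ : ∀ t, Λ t = Real.log (∫ y, Real.exp (t * y) ∂μ))
    (η : ℝ) (hη : ∀ t, Λ η ≤ Λ t)
    (σ2 : ℝ)
    (hσ : σ2 = variance id (μ.withDensity fun y =>
      ENNReal.ofReal (Real.exp (η * y) / ∫ z, Real.exp (η * z) ∂μ)))
    (ε : ℝ) (hε : 0 < ε) (n : ℕ) (hn : 0 < n) :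
    ENNReal.ofReal (Real.exp (-(n : ℝ) * (-Λ η + ε * |η|)) *
        (1 - σ2 / (n * ε ^ 2))) ≤
      Measure.pi (fun _ : Fin n => μ) {x | (∑ i, x i) / n ∈ Set.Ioo (-ε) ε} := by
  obtain ⟨s, hs⟩ := hfin
  have hexp : ∀ t, Integrable (fun y => Real.exp (t * y)) μ :=
    fun t => integrable_of_measure_compl_finset_eq_zero hs _
  have hη_int : η ∈ interior (integrableExpSet id μ) := by simp [integrableExpSet, hexp]
  have hΛ_cgf : Λ = cgf id μ := funext hΛ
  have : IsProbabilityMeasure (μ.tilted (η * ·)) := isProbabilityMeasure_tilted (hexp η)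
  have hmean : (μ.tilted (η * ·))[id] = 0 :=
    integral_tilted_eq_zero_of_isLocalMin_cgf hη_int (hΛ_cgf ▸ .of_forall hη)
  have hσ' : σ2 = Var[id; μ.tilted (η * ·)] := hσ
  have h2 : MemLp id 2 (μ.tilted (η * ·)) := memLp_tilted_mul hη_int 2
  have hcheb := ofReal_one_sub_le_pi_sum_div_mem_Ioo h2 hn hε
  rw [hmean, zero_sub, zero_add, ← hσ'] at hcheb
  calc ENNReal.ofReal (Real.exp (-(n : ℝ) * (-Λ η + ε * |η|)) * (1 - σ2 / (n * ε ^ 2)))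
      = ENNReal.ofReal (Real.exp (n * cgf id μ η - n * (ε * |η|))) *
          ENNReal.ofReal (1 - σ2 / (n * ε ^ 2)) := by
        rw [ENNReal.ofReal_mul (Real.exp_pos _).le, ← hΛ_cgf]; ring_nf
    _ ≤ ENNReal.ofReal (Real.exp (n * cgf id μ η - n * (ε * |η|))) *
          Measure.pi (fun _ => μ.tilted (η * ·)) {x | (∑ i, x i) / n ∈ Set.Ioo (-ε) ε} := by
        gcongr
    _ ≤ _ := ofReal_exp_mul_pi_tilted_le_pi (hexp η)
        ((by fun_prop : Measurable fun x : Fin n → ℝ => (∑ i, x i) / n) measurableSet_Ioo)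
        fun x hx => mul_le_of_div_mem_Ioo (Nat.cast_pos.2 hn) hx

theorem cramer_lower (μ : Measure ℝ) [IsProbabilityMeasure μ]
    (hfin : ∃ s : Finset ℝ, μ (↑s : Set ℝ)ᶜ = 0)
    (hpos : 0 < μ (Set.Ioi 0)) (hneg : 0 < μ (Set.Iio 0))
    (Λ : ℝ → ℝ) (hΛ : ∀ t, Λ t = Real.log (∫ y, Real.exp (t * y) ∂μ))
    (η : ℝ) (hη : ∀ t, Λ η ≤ Λ t)
    (σ2 : ℝ)
    (hσ : σ2 = variance id (μ.withDensity fun y =>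
      ENNReal.ofReal (Real.exp (η * y) / ∫ z, Real.exp (η * z) ∂μ)))
    (ε : ℝ) (hε : 0 < ε) (n : ℕ) (hn : 0 < n) :
    ENNReal.ofReal (Real.exp (-(n : ℝ) * (-Λ η + ε * |η|)) *
        (1 - σ2 / (n * ε ^ 2))) ≤
      Measure.pi (fun _ : Fin n => μ) {x | (∑ i, x i) / n ∈ Set.Ioo (-ε) ε} :=
  cramer_lower_general μ hfin Λ hΛ η hη σ2 hσ ε hε n hn
end

section
/- (Exact moment generating function of Z − W) Let W and Z be independent. For every θ ∈ ℝ, E[ e^{θ(Z − W)} ] = 1 + C(θ)·(log n / n) + D(θ)·(log n / n)², where, writing α* = ∑_{i=1}^m α_i and β* = ∑_{i=1}^m β_i: C(θ) = −α* − β* + ∑_{i=1}^m [ α_i (β_i/α_i)^θ + β_i (α_i/β_i)^θ ] and D(θ) = ∑_{i=1}^m α_i β_i + α* β* − ∑_{i=1}^m ( α* β_i (α_i/β_i)^θ + β* α_i (β_i/α_i)^θ ) + ∑_{i≠j} α_i β_j ( (α_j β_i)/(β_j α_i) )^θ. -/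
/-!
Under the product law the integrand factorises as `exp (θ Z) * exp (-θ W)`, so the integral is
the product of two moment generating functions of finitely supported laws. Since
`p_k / q_k = α_k / β_k`, with `L = log n / n` these are `1 - β* L + (∑ β_i (α_i/β_i)^θ) L` and
`1 - α* L + (∑ α_i (β_i/α_i)^θ) L`. Expanding their product, the diagonal terms of
`(∑ α_i (β_i/α_i)^θ) (∑ β_j (α_j/β_j)^θ)` collapse to `α_i β_i`, and the off-diagonal ones
are the cross terms of `D(θ)`.
-/

open MeasureTheory Finset Filter
open scoped Classical ENNReal

open ProbabilityTheory

noncomputable def atomicLaw {ι : Type*} [Fintype ι] (w x : ι → ℝ) : Measure ℝ :=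
  (1 - ∑ k, ENNReal.ofReal (w k)) • Measure.dirac 0
    + ∑ k, ENNReal.ofReal (w k) • Measure.dirac (x k)

theorem Wdist_eq_atomicLaw {m : ℕ} (p q : Fin m → ℝ) :
    Wdist p q = atomicLaw p fun k => Real.log (p k / q k) := rfl

theorem Zdist_eq_atomicLaw {m : ℕ} (p q : Fin m → ℝ) :
    Zdist p q = atomicLaw q fun k => Real.log (p k / q k) := rfl

section AtomicLaw

variable {ι : Type*} [Fintype ι] (w x : ι → ℝ)

instance : IsFiniteMeasure (atomicLaw w x) := by
  have := (Measure.dirac (0 : ℝ)).smul_finite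
    (ne_top_of_le_ne_top ENNReal.one_ne_top (tsub_le_self (b := ∑ k, ENNReal.ofReal (w k))))
  have (k : ι) := (Measure.dirac (x k)).smul_finite (ENNReal.ofReal_ne_top (r := w k))
  unfold atomicLaw; infer_instance

instance {m : ℕ} (p q : Fin m → ℝ) : IsFiniteMeasure (Wdist p q) :=
  inferInstanceAs (IsFiniteMeasure (atomicLaw _ _))

instance {m : ℕ} (p q : Fin m → ℝ) : IsFiniteMeasure (Zdist p q) :=
  inferInstanceAs (IsFiniteMeasure (atomicLaw _ _))

theorem integrable_atomicLaw (f : ℝ → ℝ) : Integrable f (atomicLaw w x) := by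
  have hsmul (c : ℝ≥0∞) (hc : c ≠ ∞) (a : ℝ) : Integrable f (c • Measure.dirac a) :=
    (integrable_dirac (by simp)).smul_measure hc
  simp only [atomicLaw, integrable_add_measure, integrable_finsetSum_measure]
  exact ⟨hsmul _ (ne_top_of_le_ne_top ENNReal.one_ne_top tsub_le_self) _,
    fun k _ => hsmul _ ENNReal.ofReal_ne_top _⟩

theorem integral_atomicLaw (hw : ∀ k, 0 ≤ w k) (hw1 : ∑ k, w k ≤ 1) (f : ℝ → ℝ) :
    ∫ t, f t ∂atomicLaw w x = (1 - ∑ k, w k) * f 0 + ∑ k, w k * f (x k) := by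
  have hmass : (1 - ∑ k, ENNReal.ofReal (w k)).toReal = 1 - ∑ k, w k := by
    rw [← ENNReal.ofReal_sum_of_nonneg fun k _ => hw k, ← ENNReal.ofReal_one,
      ← ENNReal.ofReal_sub _ (sum_nonneg fun k _ => hw k), ENNReal.toReal_ofReal (by linarith)]
  have hint := integrable_atomicLaw w x f
  simp only [atomicLaw, integrable_add_measure, integrable_finsetSum_measure] at hint
  rw [atomicLaw, integral_add_measure hint.1 (integrable_finsetSum_measure.2 hint.2),
    integral_finsetSum_measure hint.2]
  simp [integral_smul_measure, hmass, ENNReal.toReal_ofReal (hw _)]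

theorem mgf_id_atomicLaw (hw : ∀ k, 0 ≤ w k) (hw1 : ∑ k, w k ≤ 1) (θ : ℝ) :
    mgf id (atomicLaw w x) θ = 1 - ∑ k, w k + ∑ k, w k * Real.exp (θ * x k) := by
  rw [mgf, integral_atomicLaw w x hw hw1]
  simp

end AtomicLaw

theorem integral_exp_mul_sub_prod (μ ν : Measure ℝ) [SFinite μ] [SFinite ν] (θ : ℝ) :
    ∫ z : ℝ × ℝ, Real.exp (θ * (z.1 - z.2)) ∂μ.prod ν = mgf id μ θ * mgf id ν (-θ) := by
  simp only [mgf, id, ← integral_prod_mul, ← Real.exp_add]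
  ring_nf

theorem mul_exp_mul_log_div_mul_mul {L : ℝ} (hL : 0 ≤ L) {a b : ℝ} (ha : 0 < a) (hb : 0 < b)
    (θ : ℝ) : b * L * Real.exp (θ * Real.log (a * L / (b * L))) = b * (a / b) ^ θ * L := by
  -- for `L = 0` the atom `log (a * L / (b * L)) = log 0` is junk but carries weight `0`
  rcases hL.eq_or_lt with rfl | hL
  · simp
  rw [mul_div_mul_right _ _ hL.ne', mul_comm θ, ← Real.rpow_def_of_pos (div_pos ha hb)]
  ring

section ScaledLaws

variable {m : ℕ} {α β : Fin m → ℝ} (hα : ∀ i, 0 < α i) (hβ : ∀ i, 0 < β i) {L : ℝ} (hL : 0 ≤ L)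
include hα hβ hL

theorem mgf_Zdist_mul (hβ1 : ∑ i, β i * L ≤ 1) (θ : ℝ) :
    mgf id (Zdist (fun i => α i * L) (fun i => β i * L)) θ =
      1 - (∑ i, β i) * L + (∑ i, β i * (α i / β i) ^ θ) * L := by
  rw [Zdist_eq_atomicLaw, mgf_id_atomicLaw _ _ (fun i => mul_nonneg (hβ i).le hL) hβ1,
    sum_mul, sum_mul]
  simp only [mul_exp_mul_log_div_mul_mul hL (hα _) (hβ _)]

theorem mgf_Wdist_mul_neg (hα1 : ∑ i, α i * L ≤ 1) (θ : ℝ) :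
    mgf id (Wdist (fun i => α i * L) (fun i => β i * L)) (-θ) =
      1 - (∑ i, α i) * L + (∑ i, α i * (β i / α i) ^ θ) * L := by
  have hflip (i : Fin m) : -θ * Real.log (α i * L / (β i * L)) =
      θ * Real.log (β i * L / (α i * L)) := by
    rw [← inv_div, Real.log_inv]; ring
  rw [Wdist_eq_atomicLaw, mgf_id_atomicLaw _ _ (fun i => mul_nonneg (hα i).le hL) hα1,
    sum_mul, sum_mul]
  simp only [hflip, mul_exp_mul_log_div_mul_mul hL (hβ _) (hα _)]

end ScaledLaws

theorem Finset.sum_mul_sum_eq_sum_add_sum_compl {ι R : Type*} [Fintype ι] [DecidableEq ι]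
    [NonUnitalNonAssocSemiring R] (f g : ι → R) :
    (∑ i, f i) * ∑ j, g j = ∑ i, f i * g i + ∑ i, ∑ j ∈ {i}ᶜ, f i * g j := by
  rw [sum_mul_sum, ← sum_add_distrib]
  exact sum_congr rfl fun i _ => Fintype.sum_eq_add_sum_compl i _

theorem sum_mul_rpow_div_mul_sum_mul_rpow_div {ι : Type*} [Fintype ι] [DecidableEq ι]
    {α β : ι → ℝ} (hα : ∀ i, 0 < α i) (hβ : ∀ i, 0 < β i) (θ : ℝ) :
    (∑ i, α i * (β i / α i) ^ θ) * (∑ j, β j * (α j / β j) ^ θ) =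
      ∑ i, α i * β i + ∑ i, ∑ j ∈ {i}ᶜ, α i * β j * ((α j * β i) / (β j * α i)) ^ θ := by
  have hdiag (i : ι) : α i * (β i / α i) ^ θ * (β i * (α i / β i) ^ θ) = α i * β i := by
    rw [mul_mul_mul_comm, ← Real.mul_rpow (div_pos (hβ i) (hα i)).le (div_pos (hα i) (hβ i)).le,
      div_mul_div_comm, mul_comm (β i), div_self (mul_pos (hα i) (hβ i)).ne', Real.one_rpow,
      mul_one]
  have hoff (i j : ι) : α i * (β i / α i) ^ θ * (β j * (α j / β j) ^ θ) =
      α i * β j * ((α j * β i) / (β j * α i)) ^ θ := by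
    rw [← div_mul_div_comm, Real.mul_rpow (div_pos (hα j) (hβ j)).le (div_pos (hβ i) (hα i)).le]
    ring
  simp only [sum_mul_sum_eq_sum_add_sum_compl, hdiag, hoff]

theorem one_sub_add_mul_one_sub_add_eq {ι : Type*} [Fintype ι] [DecidableEq ι]
    {α β : ι → ℝ} (hα : ∀ i, 0 < α i) (hβ : ∀ i, 0 < β i) (θ L : ℝ) :
    (1 - (∑ i, β i) * L + (∑ i, β i * (α i / β i) ^ θ) * L) *
        (1 - (∑ i, α i) * L + (∑ i, α i * (β i / α i) ^ θ) * L) =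
      1 +
        (-(∑ i, α i) - (∑ i, β i) +
            ∑ i, (α i * (β i / α i) ^ θ + β i * (α i / β i) ^ θ)) * L +
        ((∑ i, α i * β i) + (∑ i, α i) * (∑ i, β i) -
            (∑ i, ((∑ j, α j) * β i * (α i / β i) ^ θ +
              (∑ j, β j) * α i * (β i / α i) ^ θ)) +
            ∑ i, ∑ j ∈ ({i}ᶜ : Finset ι),
              α i * β j * ((α j * β i) / (β j * α i)) ^ θ) * L ^ 2 := by
  simp only [sum_add_distrib, mul_assoc (∑ j, α j), mul_assoc (∑ j, β j), ← mul_sum]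
  linear_combination L ^ 2 * sum_mul_rpow_div_mul_sum_mul_rpow_div hα hβ θ

theorem mgf_exact_general (m : ℕ) (α β : Fin m → ℝ)
    (hα : ∀ i, 0 < α i) (hβ : ∀ i, 0 < β i)
    (n : ℕ)
    (hp1 : ∑ i, α i * Real.log n / n ≤ 1) (hq1 : ∑ i, β i * Real.log n / n ≤ 1)
    (θ : ℝ) :
    (∫ x : ℝ × ℝ, Real.exp (θ * (x.1 - x.2))
        ∂((Zdist (fun i => α i * Real.log n / n) (fun i => β i * Real.log n / n)).prod
          (Wdist (fun i => α i * Real.log n / n) (fun i => β i * Real.log n / n)))) =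
      1 +
        (-(∑ i, α i) - (∑ i, β i) +
            ∑ i, (α i * (β i / α i) ^ θ + β i * (α i / β i) ^ θ)) *
          (Real.log n / n) +
        ((∑ i, α i * β i) + (∑ i, α i) * (∑ i, β i) -
            (∑ i, ((∑ j, α j) * β i * (α i / β i) ^ θ +
              (∑ j, β j) * α i * (β i / α i) ^ θ)) +
            ∑ i, ∑ j ∈ ({i}ᶜ : Finset (Fin m)),
              α i * β j * ((α j * β i) / (β j * α i)) ^ θ) *
          (Real.log n / n) ^ 2 := by
  have hL : 0 ≤ Real.log n / n := div_nonneg (Real.log_natCast_nonneg n) n.cast_nonneg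
  have hp (γ : Fin m → ℝ) : (fun i => γ i * Real.log n / n) = fun i => γ i * (Real.log n / n) :=
    funext fun i => mul_div_assoc _ _ _
  rw [hp] at hp1 hq1 ⊢
  rw [hp, integral_exp_mul_sub_prod, mgf_Zdist_mul hα hβ hL hq1, mgf_Wdist_mul_neg hα hβ hL hp1]
  exact one_sub_add_mul_one_sub_add_eq hα hβ θ _

theorem mgf_exact (m : ℕ) (hm : 0 < m) (α β : Fin m → ℝ)
    (hα : ∀ i, 0 < α i) (hβ : ∀ i, 0 < β i)
    (n : ℕ) (hn : 2 ≤ n)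
    (hp1 : ∑ i, α i * Real.log n / n ≤ 1) (hq1 : ∑ i, β i * Real.log n / n ≤ 1)
    (θ : ℝ) :
    (∫ x : ℝ × ℝ, Real.exp (θ * (x.1 - x.2))
        ∂((Zdist (fun i => α i * Real.log n / n) (fun i => β i * Real.log n / n)).prod
          (Wdist (fun i => α i * Real.log n / n) (fun i => β i * Real.log n / n)))) =
      1 +
        (-(∑ i, α i) - (∑ i, β i) +
            ∑ i, (α i * (β i / α i) ^ θ + β i * (α i / β i) ^ θ)) *
          (Real.log n / n) +
        ((∑ i, α i * β i) + (∑ i, α i) * (∑ i, β i) -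
            (∑ i, ((∑ j, α j) * β i * (α i / β i) ^ θ +
              (∑ j, β j) * α i * (β i / α i) ^ θ)) +
            ∑ i, ∑ j ∈ ({i}ᶜ : Finset (Fin m)),
              α i * β j * ((α j * β i) / (β j * α i)) ^ θ) *
          (Real.log n / n) ^ 2 :=
  mgf_exact_general m α β hα hβ n hp1 hq1 θ
end

section
/- (Rate-function optimization identity) For positive reals α_1,…,α_m, β_1,…,β_m, sup_{θ∈ℝ} ∑_{i=1}^{m} ( α_i + β_i − α_i^θ β_i^{1−θ} − β_i^θ α_i^{1−θ} ) = ∑_{i=1}^{m} (√α_i − √β_i)², and the supremum is attained at θ = 1/2. -/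
/-!
The two products `a ^ θ * b ^ (1 - θ)` and `b ^ θ * a ^ (1 - θ)` multiply to `a * b` for every `θ`,
so by AM-GM their sum is at least `2 * √a * √b`, with equality at `θ = 1 / 2`. Hence each summand
is at most `(√a - √b) ^ 2` and attains this bound at `θ = 1 / 2`.
-/

open Finset

theorem Real.rpow_mul_rpow_one_sub_mul_rpow_mul_rpow_one_sub {a b : ℝ} (ha : 0 ≤ a) (hb : 0 ≤ b)
    (θ : ℝ) : a ^ θ * b ^ (1 - θ) * (b ^ θ * a ^ (1 - θ)) = a * b := by
  have hθ : θ + (1 - θ) ≠ 0 := by norm_num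
  calc a ^ θ * b ^ (1 - θ) * (b ^ θ * a ^ (1 - θ))
      = a ^ (θ + (1 - θ)) * b ^ (θ + (1 - θ)) := by
        rw [Real.rpow_add' ha hθ, Real.rpow_add' hb hθ]; ring
    _ = a * b := by norm_num

theorem Real.two_mul_sqrt_mul_sqrt_le_rpow_mul_rpow_one_sub_add {a b : ℝ} (ha : 0 ≤ a)
    (hb : 0 ≤ b) (θ : ℝ) :
    2 * √a * √b ≤ a ^ θ * b ^ (1 - θ) + b ^ θ * a ^ (1 - θ) := by
  set x := a ^ θ * b ^ (1 - θ)
  set y := b ^ θ * a ^ (1 - θ)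
  have hx : 0 ≤ x := by positivity
  have hy : 0 ≤ y := by positivity
  have hxy : √x * √y = √a * √b := by
    rw [← Real.sqrt_mul hx, ← Real.sqrt_mul ha,
      Real.rpow_mul_rpow_one_sub_mul_rpow_mul_rpow_one_sub ha hb]
  calc 2 * √a * √b = 2 * √x * √y := by rw [mul_assoc, ← hxy, mul_assoc]
    _ ≤ √x ^ 2 + √y ^ 2 := two_mul_le_add_sq _ _
    _ = x + y := by rw [Real.sq_sqrt hx, Real.sq_sqrt hy]

theorem Real.add_sub_rpow_mul_rpow_one_sub_sub_le_sq_sqrt_sub {a b : ℝ} (ha : 0 ≤ a) (hb : 0 ≤ b)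
    (θ : ℝ) :
    a + b - a ^ θ * b ^ (1 - θ) - b ^ θ * a ^ (1 - θ) ≤ (√a - √b) ^ 2 := by
  have := Real.two_mul_sqrt_mul_sqrt_le_rpow_mul_rpow_one_sub_add ha hb θ
  rw [sub_sq, Real.sq_sqrt ha, Real.sq_sqrt hb]
  linarith

theorem Real.add_sub_rpow_half_mul_rpow_half_sub {a b : ℝ} (ha : 0 ≤ a) (hb : 0 ≤ b) :
    a + b - a ^ ((1 : ℝ) / 2) * b ^ (1 - (1 : ℝ) / 2) - b ^ ((1 : ℝ) / 2) * a ^ (1 - (1 : ℝ) / 2)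
      = (√a - √b) ^ 2 := by
  rw [show (1 : ℝ) - 1 / 2 = 1 / 2 by norm_num, ← Real.sqrt_eq_rpow, ← Real.sqrt_eq_rpow, sub_sq,
    Real.sq_sqrt ha, Real.sq_sqrt hb]
  ring

theorem rate_optimization (m : ℕ) (α β : Fin m → ℝ)
    (hα : ∀ i, 0 < α i) (hβ : ∀ i, 0 < β i) :
    (⨆ θ : ℝ, ∑ i, (α i + β i - α i ^ θ * β i ^ (1 - θ) - β i ^ θ * α i ^ (1 - θ))) =
        ∑ i, (Real.sqrt (α i) - Real.sqrt (β i)) ^ 2 ∧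
      (∑ i, (α i + β i - α i ^ ((1 : ℝ) / 2) * β i ^ (1 - (1 : ℝ) / 2) -
          β i ^ ((1 : ℝ) / 2) * α i ^ (1 - (1 : ℝ) / 2))) =
        ∑ i, (Real.sqrt (α i) - Real.sqrt (β i)) ^ 2 := by
  have attained : (∑ i, (α i + β i - α i ^ ((1 : ℝ) / 2) * β i ^ (1 - (1 : ℝ) / 2) -
      β i ^ ((1 : ℝ) / 2) * α i ^ (1 - (1 : ℝ) / 2))) =
      ∑ i, (Real.sqrt (α i) - Real.sqrt (β i)) ^ 2 :=
    sum_congr rfl fun i _ => Real.add_sub_rpow_half_mul_rpow_half_sub (hα i).le (hβ i).le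
  refine ⟨ciSup_eq_of_forall_le_of_forall_lt_exists_gt (fun θ => ?_) fun w hw => ?_, attained⟩
  · exact sum_le_sum fun i _ =>
      Real.add_sub_rpow_mul_rpow_one_sub_sub_le_sq_sqrt_sub (hα i).le (hβ i).le θ
  · exact ⟨1 / 2, attained ▸ hw⟩
end
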